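/- arXiv:1004.3439 — 2 statements merged into one kernel-verified Lean document; each statement's English description precedes it below -/
import Mathlib

section
/- Let f : M → M be continuous on a compact metric space, Λ a compact invariant subset, and let x, (x_n), and sequences a_n < b_n of natural numbers be such that d(f^j x_n, f^j x) < 2^{-n+1} δ for all a_n ≤ j ≤ b_n, where x_n is periodic with period p_n dividing b_n − a_n, and a_n / (b_n − a_n) → 0. Then for every continuous ξ : M → ℝ, the difference between (1/b_n) ∑_{j=0}^{b_n−1} ξ(f^j x) and the integral of ξ against the periodic measure Y_n supported on the orbit of x_n tends to 0 as n → ∞. -/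
/-! The integral of `ξ` against `Y_n` is the average of `ξ ∘ f^j` at `x_n` over one period, hence,
by periodicity, over the window `[a_n, b_n)`. On that window the orbit of `x` shadows the orbit of
`x_n` with error `2^{1-n} δ → 0`, so uniform continuity of `ξ` makes the two window averages merge.
Finally, the Birkhoff average of `x` over `[0, b_n)` differs from its average over `[a_n, b_n)` by
at most `2 ‖ξ‖ a_n / b_n → 0`. -/

open MeasureTheory Filter Topology
open scoped ENNReal NNReal

variable {M : Type*}

noncomputable def perMeas [MeasurableSpace M]
    (f : M → M) (x : M) (k : ℕ) : Measure M :=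
  ((k : ℝ≥0∞))⁻¹ • ∑ i ∈ Finset.range k, Measure.dirac (f^[i] x)

open Finset

theorem integral_perMeas [MeasurableSpace M] [MeasurableSingletonClass M]
    (f : M → M) (y : M) (k : ℕ) (ξ : M → ℝ) :
    ∫ z, ξ z ∂(perMeas f y k) = (k : ℝ)⁻¹ * ∑ i ∈ range k, ξ (f^[i] y) := by
  rw [perMeas, integral_smul_measure,
    integral_finsetSum_measure fun i _ => integrable_dirac enorm_lt_top]
  simp [integral_dirac, ENNReal.toReal_inv, smul_eq_mul]

namespace Function.Periodic

variable {β : Type*} {g : ℕ → β} {p : ℕ}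

theorem sum_range_add_left [AddCancelCommMonoid β] (hg : Periodic g p) (a : ℕ) :
    ∑ j ∈ range p, g (a + j) = ∑ j ∈ range p, g j := by
  induction a with
  | zero => simp
  | succ a ih =>
    rw [← ih]
    apply add_right_cancel (b := g a)
    calc ∑ j ∈ range p, g (a + 1 + j) + g a = ∑ j ∈ range (p + 1), g (a + j) := by
          rw [sum_range_succ']; simp only [add_assoc, add_comm 1, add_zero]
      _ = ∑ j ∈ range p, g (a + j) + g a := by rw [sum_range_succ, hg a]

theorem sum_range_mul_add [AddCommMonoid β] (hg : Periodic g p) (a m : ℕ) :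
    ∑ j ∈ range (m * p), g (a + j) = m • ∑ j ∈ range p, g (a + j) := by
  induction m with
  | zero => simp
  | succ m ih =>
    have hshift : ∀ j, g (a + (m * p + j)) = g (a + j) := fun j => by
      rw [← add_assoc, add_right_comm]
      exact hg.nat_mul m (a + j)
    rw [Nat.succ_mul, sum_range_add, ih, succ_nsmul]
    simp only [hshift]

theorem avg_Ico_eq {g : ℕ → ℝ} (hg : Periodic g p) {a b : ℕ} (hab : a < b) (hdvd : p ∣ b - a) :
    ((b - a : ℕ) : ℝ)⁻¹ * ∑ j ∈ Ico a b, g j = (p : ℝ)⁻¹ * ∑ j ∈ range p, g j := by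
  obtain ⟨m, hm⟩ := hdvd
  have hm0 : (m : ℝ) ≠ 0 := by
    have : m ≠ 0 := by rintro rfl; omega
    exact_mod_cast this
  rw [sum_Ico_eq_sum_range, hm, mul_comm p, hg.sum_range_mul_add, hg.sum_range_add_left,
    nsmul_eq_mul]
  push_cast
  field_simp

end Function.Periodic

theorem norm_sum_le_card_mul {ι E : Type*} [SeminormedAddCommGroup E] {s : Finset ι}
    {u : ι → E} {C : ℝ} (hu : ∀ j ∈ s, ‖u j‖ ≤ C) : ‖∑ j ∈ s, u j‖ ≤ #s * C := by
  simpa using norm_sum_le_of_le s hu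

theorem norm_avg_range_sub_avg_Ico_le {u : ℕ → ℝ} {C : ℝ} (hu : ∀ j, ‖u j‖ ≤ C) {a b : ℕ}
    (hab : a < b) :
    ‖(b : ℝ)⁻¹ * ∑ j ∈ range b, u j - ((b - a : ℕ) : ℝ)⁻¹ * ∑ j ∈ Ico a b, u j‖
      ≤ 2 * C * (a / b) := by
  have hb : (0 : ℝ) < b := by exact_mod_cast (Nat.zero_le a).trans_lt hab
  have hba : (0 : ℝ) < ((b - a : ℕ) : ℝ) := by exact_mod_cast Nat.sub_pos_of_lt hab
  have h_initial : ‖∑ j ∈ range a, u j‖ ≤ a * C := by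
    simpa using norm_sum_le_card_mul (s := range a) fun j _ => hu j
  have h_avg : ‖((b - a : ℕ) : ℝ)⁻¹ * ∑ j ∈ Ico a b, u j‖ ≤ C := by
    rw [norm_mul, norm_inv, Real.norm_natCast, inv_mul_le_iff₀ hba, ← Nat.card_Ico]
    exact norm_sum_le_card_mul fun j _ => hu j
  have key : (b : ℝ)⁻¹ * ∑ j ∈ range b, u j - ((b - a : ℕ) : ℝ)⁻¹ * ∑ j ∈ Ico a b, u j
      = (b : ℝ)⁻¹ * (∑ j ∈ range a, u j - a * (((b - a : ℕ) : ℝ)⁻¹ * ∑ j ∈ Ico a b, u j)) := by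
    rw [← sum_range_add_sum_Ico _ hab.le]
    rw [Nat.cast_sub hab.le] at hba ⊢
    field_simp
    ring
  rw [key, norm_mul, norm_inv, Real.norm_natCast]
  calc (b : ℝ)⁻¹ * ‖∑ j ∈ range a, u j - a * (((b - a : ℕ) : ℝ)⁻¹ * ∑ j ∈ Ico a b, u j)‖
      ≤ (b : ℝ)⁻¹ * (a * C + a * C) := by
        gcongr
        refine (norm_sub_le _ _).trans (add_le_add h_initial ?_)
        rw [norm_mul, Real.norm_natCast]
        gcongr
    _ = 2 * C * (a / b) := by ring

theorem UniformContinuous.tendsto_avg_sub_of_dist_lt {α ι : Type*} [PseudoMetricSpace α]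
    {ξ : α → ℝ} (hξ : UniformContinuous ξ) {s : ℕ → Finset ι} {u v : ℕ → ι → α} {r : ℕ → ℝ}
    (hr : Tendsto r atTop (𝓝 0)) (huv : ∀ n, ∀ j ∈ s n, dist (u n j) (v n j) < r n) :
    Tendsto (fun n => (#(s n) : ℝ)⁻¹ * ∑ j ∈ s n, (ξ (u n j) - ξ (v n j))) atTop (𝓝 0) := by
  rw [NormedAddGroup.tendsto_nhds_zero]
  intro ε hε
  obtain ⟨η, hη, hξη⟩ := Metric.uniformContinuous_iff.mp hξ (ε / 2) (half_pos hε)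
  filter_upwards [hr.eventually (gt_mem_nhds hη)] with n hn
  have hclose : ∀ j ∈ s n, ‖ξ (u n j) - ξ (v n j)‖ ≤ ε / 2 :=
    fun j hj => (hξη ((huv n j hj).trans hn)).le
  calc ‖(#(s n) : ℝ)⁻¹ * ∑ j ∈ s n, (ξ (u n j) - ξ (v n j))‖
      ≤ (#(s n) : ℝ)⁻¹ * (#(s n) * (ε / 2)) := by
        rw [norm_mul, norm_inv, Real.norm_natCast]
        gcongr
        exact norm_sum_le_card_mul hclose
    _ ≤ ε / 2 := by
        rcases (#(s n)).eq_zero_or_pos with h | h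
        · simpa [h] using (half_pos hε).le
        · rw [inv_mul_cancel_left₀ (by positivity)]
    _ < ε := half_lt_self hε

theorem tendsto_div_of_tendsto_div_sub {a b : ℕ → ℕ} (hab : ∀ n, a n < b n)
    (h : Tendsto (fun n => (a n : ℝ) / ((b n : ℝ) - (a n : ℝ))) atTop (𝓝 0)) :
    Tendsto (fun n => (a n : ℝ) / b n) atTop (𝓝 0) := by
  refine squeeze_zero (fun n => by positivity) (fun n => ?_) h
  have : (0 : ℝ) < b n - a n := sub_pos.mpr (by exact_mod_cast hab n)
  exact div_le_div_of_nonneg_left (by positivity) this (by simp)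

theorem tendsto_two_zpow_one_sub_mul (δ : ℝ) :
    Tendsto (fun n : ℕ => (2 : ℝ) ^ (1 - (n : ℤ)) * δ) atTop (𝓝 0) := by
  have := (tendsto_pow_atTop_nhds_zero_of_lt_one (r := (2⁻¹ : ℝ)) (by norm_num)
    (by norm_num)).const_mul (2 * δ)
  rw [mul_zero] at this
  refine this.congr fun n => ?_
  rw [zpow_sub₀ two_ne_zero, zpow_one, zpow_natCast, inv_pow]
  ring

theorem birkhoff_average_approx_periodic_measure_general
    [MetricSpace M] [CompactSpace M] [MeasurableSpace M] [BorelSpace M]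
    (f : M → M) (δ : ℝ) (x : M) (xs : ℕ → M)
    (a b p : ℕ → ℕ) (hab : ∀ n, a n < b n)
    (hper : ∀ n, f^[p n] (xs n) = xs n) (hdvd : ∀ n, p n ∣ (b n - a n))
    (hshadow : ∀ n, ∀ j, a n ≤ j → j ≤ b n →
      dist (f^[j] (xs n)) (f^[j] x) < (2 : ℝ) ^ (1 - (n : ℤ)) * δ)
    (hratio : Tendsto (fun n => (a n : ℝ) / ((b n : ℝ) - (a n : ℝ))) atTop (nhds 0)) :
    ∀ ξ : M → ℝ, Continuous ξ →
      Tendsto (fun n => (b n : ℝ)⁻¹ * ∑ j ∈ Finset.range (b n), ξ (f^[j] x)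
        - ∫ z, ξ z ∂(perMeas f (xs n) (p n))) atTop (nhds 0) := by
  intro ξ hξ
  have h_integral : ∀ n, ∫ z, ξ z ∂(perMeas f (xs n) (p n))
      = ((b n - a n : ℕ) : ℝ)⁻¹ * ∑ j ∈ Ico (a n) (b n), ξ (f^[j] (xs n)) := fun n => by
    have hg : Function.Periodic (fun j => ξ (f^[j] (xs n))) (p n) := fun j => by
      simp only [Function.iterate_add_apply, hper n]
    rw [integral_perMeas, hg.avg_Ico_eq (hab n) (hdvd n)]
  have h_initial : Tendsto (fun n => (b n : ℝ)⁻¹ * ∑ j ∈ range (b n), ξ (f^[j] x)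
      - ((b n - a n : ℕ) : ℝ)⁻¹ * ∑ j ∈ Ico (a n) (b n), ξ (f^[j] x)) atTop (𝓝 0) := by
    let ξc : C(M, ℝ) := ⟨ξ, hξ⟩
    refine squeeze_zero_norm (fun n => norm_avg_range_sub_avg_Ico_le
      (fun j => ξc.norm_coe_le_norm _) (hab n)) ?_
    simpa using (tendsto_div_of_tendsto_div_sub hab hratio).const_mul (2 * ‖ξc‖)
  have h_shadow : Tendsto (fun n => ((b n - a n : ℕ) : ℝ)⁻¹
      * ∑ j ∈ Ico (a n) (b n), (ξ (f^[j] x) - ξ (f^[j] (xs n)))) atTop (𝓝 0) := by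
    simpa using (CompactSpace.uniformContinuous_of_continuous hξ).tendsto_avg_sub_of_dist_lt
      (s := fun n => Ico (a n) (b n)) (tendsto_two_zpow_one_sub_mul δ) fun n j hj =>
        (dist_comm _ _).trans_lt (hshadow n j (mem_Ico.1 hj).1 (mem_Ico.1 hj).2.le)
  have := h_initial.add h_shadow
  rw [add_zero] at this
  refine this.congr fun n => ?_
  rw [h_integral, sum_sub_distrib]
  ring

/-- if `x` shadows the periodic points `x_n` on `[a_n, b_n]` with error
`2^{-n+1} δ`, the period `p_n` of `x_n` divides `b_n - a_n`, and `a_n/(b_n - a_n) → 0`,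
then for every continuous `ξ` the Birkhoff average `(1/b_n) ∑_{j<b_n} ξ(f^j x)`
approaches `∫ ξ dY_n`, where `Y_n` is the periodic measure of `x_n`. -/
theorem birkhoff_average_approx_periodic_measure
    [MetricSpace M] [CompactSpace M] [MeasurableSpace M] [BorelSpace M]
    (f : M → M) (hf : Continuous f) (Λ : Set M) (hΛc : IsCompact Λ) (hΛi : f '' Λ ⊆ Λ)
    (δ : ℝ) (hδ : 0 < δ) (x : M) (hx : x ∈ Λ) (xs : ℕ → M) (hxs : ∀ n, xs n ∈ Λ)
    (a b p : ℕ → ℕ) (hab : ∀ n, a n < b n) (hp : ∀ n, 0 < p n)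
    (hper : ∀ n, f^[p n] (xs n) = xs n) (hdvd : ∀ n, p n ∣ (b n - a n))
    (hshadow : ∀ n, ∀ j, a n ≤ j → j ≤ b n →
      dist (f^[j] (xs n)) (f^[j] x) < (2 : ℝ) ^ (1 - (n : ℤ)) * δ)
    (hratio : Tendsto (fun n => (a n : ℝ) / ((b n : ℝ) - (a n : ℝ))) atTop (nhds 0)) :
    ∀ ξ : M → ℝ, Continuous ξ →
      Tendsto (fun n => (b n : ℝ)⁻¹ * ∑ j ∈ Finset.range (b n), ξ (f^[j] x)
        - ∫ z, ξ z ∂(perMeas f (xs n) (p n))) atTop (nhds 0) :=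
  birkhoff_average_approx_periodic_measure_general f δ x xs a b p hab hper hdvd hshadow hratio
end

section
/- Barycenter property is symmetric in time-averaged measures: if Λ is a compact f-invariant set with the barycenter property and p, q are periodic points in Λ with periodic measures μ_p, μ_q, then for every t ∈ [0,1] and every ε > 0 there exists a periodic point z ∈ Λ whose periodic measure μ_z satisfies |∫ξ dμ_z − (t ∫ξ dμ_p + (1−t) ∫ξ dμ_q)| < ε for any fixed finite family of continuous functions ξ with ‖ξ‖ ≤ 1 (given suitable choices of n_1, n_2 proportional to t and 1−t). -/
open Filter Topology

/-- The barycenter property (with the period of the connecting periodic orbit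
controlled up to an additive `O(N)` term, constant `C`): for periodic `p, q ∈ Λ` and
`ε > 0` there is `N` such that for all `n₁, n₂` there is a periodic `z ∈ Λ` of period
`k`, `n₁ + N + n₂ ≤ k ≤ n₁ + N + n₂ + C·N`, with `d(f^i z, f^i p) < ε` for
`-n₁ ≤ i ≤ 0` and `d(f^{i+N} z, f^i q) < ε` for `0 ≤ i ≤ n₂`. -/
def BarycenterProperty {M : Type*} [MetricSpace M] (f : Equiv.Perm M) (Λ : Set M)
    (C : ℕ) : Prop :=
  ∀ p q : M, p ∈ Λ → q ∈ Λ →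
    (∃ kp : ℕ, 0 < kp ∧ (⇑f)^[kp] p = p) → (∃ kq : ℕ, 0 < kq ∧ (⇑f)^[kq] q = q) →
    ∀ ε : ℝ, 0 < ε → ∃ N : ℕ, 0 < N ∧ ∀ n₁ n₂ : ℕ, ∃ z ∈ Λ, ∃ k : ℕ,
      n₁ + N + n₂ ≤ k ∧ k ≤ n₁ + N + n₂ + C * N ∧ (⇑f)^[k] z = z ∧
      (∀ i : ℕ, i ≤ n₁ → dist ((f ^ (-(i : ℤ))) z) ((f ^ (-(i : ℤ))) p) < ε) ∧
      (∀ i : ℕ, i ≤ n₂ → dist ((⇑f)^[i + N] z) ((⇑f)^[i] q) < ε)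

/-! Split `n₁ + n₂ = m·kp·kq` in the ratio `t : 1 - t` into multiples of `kp·kq` and let `z` be
the connecting periodic orbit, of period `k = n₁ + n₂ + O(N)`. Over the stretches shadowing `p`
and `q` the Birkhoff sums of `z` are within `ε/2` per step of `n₁ ∫ξ dμ_p` and `n₂ ∫ξ dμ_q`
(uniform continuity of the finitely many `ξ`), and the remaining `O(N)` steps, like the rounding
error `kp·kq`, are negligible against `k` once `m` is large. -/

open Function

theorem exists_pos_forall_abs_sub_lt_of_dist_lt {M ι : Type*} [MetricSpace M] [CompactSpace M]
    [Fintype ι] {ξ : ι → M → ℝ} (hξ : ∀ i, Continuous (ξ i)) {e : ℝ} (he : 0 < e) :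
    ∃ δ > 0, ∀ i x y, dist x y < δ → |ξ i x - ξ i y| < e := by
  obtain ⟨δ, hδ, h⟩ := Metric.uniformContinuous_iff.mp
    (CompactSpace.uniformContinuous_of_continuous (continuous_pi hξ)) e he
  exact ⟨δ, hδ, fun i x y hxy => (dist_le_pi_dist _ _ i).trans_lt (h hxy)⟩

theorem abs_sub_mul_le_of_abs_sub_mul_le {n t L k D P : ℝ} (ht : t ∈ Set.Icc (0 : ℝ) 1)
    (hn : |n - t * L| ≤ D) (hL : L ≤ k) (hk : k ≤ L + P) : |n - t * k| ≤ D + P := by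
  rw [abs_le] at hn ⊢
  constructor <;> nlinarith [ht.1, ht.2]

theorem abs_inv_mul_sub_convex_le {k n₁ n₂ S a b t R D : ℝ} (hk : 0 < k) (ha : |a| ≤ 1)
    (hb : |b| ≤ 1) (hS : |S - (n₁ * a + n₂ * b)| ≤ R) (h₁ : |n₁ - t * k| ≤ D)
    (h₂ : |n₂ - (1 - t) * k| ≤ D) :
    |k⁻¹ * S - (t * a + (1 - t) * b)| ≤ (R + 2 * D) / k := by
  have hsplit : k⁻¹ * S - (t * a + (1 - t) * b)
      = ((S - (n₁ * a + n₂ * b)) + (n₁ - t * k) * a + (n₂ - (1 - t) * k) * b) / k := by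
    field_simp
    ring
  have hD : 0 ≤ D := (abs_nonneg _).trans h₁
  rw [hsplit, abs_div, abs_of_pos hk]
  gcongr
  calc _ ≤ |S - (n₁ * a + n₂ * b)| + |n₁ - t * k| * |a| + |n₂ - (1 - t) * k| * |b| := by
        rw [← abs_mul, ← abs_mul]
        exact abs_add_three _ _ _
    _ ≤ R + D * 1 + D * 1 := by gcongr
    _ = R + 2 * D := by ring

theorem exists_convex_split {t : ℝ} (ht : t ∈ Set.Icc (0 : ℝ) 1) (m K : ℕ) :
    ∃ n₁ n₂ : ℕ, K ∣ n₁ ∧ K ∣ n₂ ∧ n₁ + n₂ = m * K ∧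
      |(n₁ : ℝ) - t * (m * K)| ≤ K ∧ |(n₂ : ℝ) - (1 - t) * (m * K)| ≤ K := by
  set a := ⌊t * m⌋₊
  have ha : (a : ℝ) ≤ t * m := Nat.floor_le (by have := ht.1; positivity)
  have ha' : t * m < a + 1 := Nat.lt_floor_add_one _
  have ham : a ≤ m := by
    have : (a : ℝ) ≤ m := ha.trans (by nlinarith [ht.2, (Nat.cast_nonneg m : (0 : ℝ) ≤ m)])
    exact_mod_cast this
  refine ⟨a * K, (m - a) * K, dvd_mul_left _ _, dvd_mul_left _ _,
    by rw [← add_mul, Nat.add_sub_cancel' ham], ?_, ?_⟩ <;>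
  · push_cast [ham]
    rw [abs_le]
    constructor <;> nlinarith [(Nat.cast_nonneg K : (0 : ℝ) ≤ K)]

section BirkhoffSum

variable {α : Type*} {f : α → α}

theorem Function.IsPeriodicPt.birkhoffSum_mul {M : Type*} [AddCommMonoid M] {g : α → M}
    {n : ℕ} {x : α} (h : IsPeriodicPt f n x) (c : ℕ) :
    birkhoffSum f g (c * n) x = c • birkhoffSum f g n x := by
  induction c with
  | zero => simp
  | succ c ih => rw [add_mul, one_mul, birkhoffSum_add, ih, (h.const_mul c).eq, succ_nsmul]

theorem Function.IsPeriodicPt.birkhoffSum_apply_iterate {M : Type*} [AddCancelCommMonoid M]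
    {g : α → M} {n : ℕ} {x : α} (h : IsPeriodicPt f n x) (m : ℕ) :
    birkhoffSum f g n (f^[m] x) = birkhoffSum f g n x := by
  have := birkhoffSum_add f g m n x
  rw [add_comm m n, birkhoffSum_add, h.eq, add_comm] at this
  exact (add_left_cancel this).symm

theorem Function.IsPeriodicPt.birkhoffSum_eq_mul_birkhoffAverage {g : α → ℝ} {n m : ℕ} {x : α}
    (h : IsPeriodicPt f n x) (hnm : n ∣ m) :
    birkhoffSum f g m x = m * birkhoffAverage ℝ f g n x := by
  obtain ⟨c, rfl⟩ := hnm
  rcases Nat.eq_zero_or_pos n with rfl | hn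
  · simp
  rw [mul_comm n c, h.birkhoffSum_mul, birkhoffAverage, nsmul_eq_mul, smul_eq_mul]
  field_simp
  push_cast
  ring

theorem abs_birkhoffSum_le {g : α → ℝ} {B : ℝ} (hg : ∀ x, |g x| ≤ B) (n : ℕ) (x : α) :
    |birkhoffSum f g n x| ≤ n * B := by
  unfold birkhoffSum
  simpa using Finset.abs_sum_le_sum_abs (fun j => g (f^[j] x)) (Finset.range n) |>.trans
    (Finset.sum_le_sum fun j _ => hg (f^[j] x))

theorem abs_birkhoffAverage_le {g : α → ℝ} (hg : ∀ x, |g x| ≤ 1) (n : ℕ) (x : α) :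
    |birkhoffAverage ℝ f g n x| ≤ 1 := by
  rcases Nat.eq_zero_or_pos n with rfl | hn
  · simp
  rw [birkhoffAverage, smul_eq_mul, abs_mul, abs_inv, Nat.abs_cast, inv_mul_le_iff₀ (by positivity),
    mul_one]
  simpa using abs_birkhoffSum_le hg n x

theorem abs_birkhoffSum_sub_birkhoffSum_le {g : α → ℝ} {n : ℕ} {x y : α} {e : ℝ}
    (h : ∀ j < n, |g (f^[j] x) - g (f^[j] y)| ≤ e) :
    |birkhoffSum f g n x - birkhoffSum f g n y| ≤ n * e := by
  rw [← Real.dist_eq]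
  refine (dist_birkhoffSum_birkhoffSum_le f g n x y).trans ?_
  simpa using Finset.sum_le_card_nsmul _ _ e fun j hj => (Real.dist_eq _ _).trans_le
    (h j (Finset.mem_range.mp hj))

theorem abs_birkhoffSum_sub_le_of_shadowing {g : α → ℝ} (hg : ∀ x, |g x| ≤ 1) {w x y : α}
    {n₁ N n₂ k : ℕ} (hk : n₁ + N + n₂ ≤ k) {e : ℝ}
    (h₁ : ∀ j < n₁, |g (f^[j] w) - g (f^[j] x)| ≤ e)
    (h₂ : ∀ j < n₂, |g (f^[j] (f^[n₁ + N] w)) - g (f^[j] y)| ≤ e) :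
    |birkhoffSum f g k w - (birkhoffSum f g n₁ x + birkhoffSum f g n₂ y)|
      ≤ (n₁ + n₂) * e + (k - n₁ - n₂) := by
  obtain ⟨r, rfl⟩ := Nat.exists_eq_add_of_le hk
  have hS₁ := abs_birkhoffSum_sub_birkhoffSum_le h₁
  have hS₂ := abs_birkhoffSum_sub_birkhoffSum_le h₂
  have hN := abs_birkhoffSum_le (f := f) hg N (f^[n₁] w)
  have hr := abs_birkhoffSum_le (f := f) hg r (f^[n₁ + N + n₂] w)
  rw [birkhoffSum_add, birkhoffSum_add, birkhoffSum_add]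
  push_cast
  rw [abs_le] at *
  constructor <;> linarith

end BirkhoffSum

theorem Equiv.Perm.iterate_zpow_neg_apply {α : Type*} (f : Equiv.Perm α) {j n : ℕ} (h : j ≤ n)
    (x : α) : (⇑f)^[j] ((f ^ (-(n : ℤ))) x) = (f ^ (-((n - j : ℕ) : ℤ))) x := by
  rw [Equiv.Perm.iterate_eq_pow, ← Equiv.Perm.mul_apply, ← zpow_natCast, ← zpow_add]
  congr 2
  omega

theorem Equiv.Perm.abs_birkhoffSum_sub_le_of_shadowing {α : Type*} (f : Equiv.Perm α)
    {g : α → ℝ} (hg : ∀ x, |g x| ≤ 1) {z p q : α} {k kp kq n₁ N n₂ : ℕ}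
    (hz : IsPeriodicPt f k z) (hp : IsPeriodicPt f kp p) (hq : IsPeriodicPt f kq q)
    (hn₁ : kp ∣ n₁) (hn₂ : kq ∣ n₂) (hk : n₁ + N + n₂ ≤ k) {e : ℝ}
    (hback : ∀ i ≤ n₁, |g ((f ^ (-(i : ℤ))) z) - g ((f ^ (-(i : ℤ))) p)| ≤ e)
    (hfwd : ∀ i ≤ n₂, |g (f^[i + N] z) - g (f^[i] q)| ≤ e) :
    |birkhoffSum f g k z - (n₁ * birkhoffAverage ℝ f g kp p + n₂ * birkhoffAverage ℝ f g kq q)|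
      ≤ (n₁ + n₂) * e + (k - n₁ - n₂) := by
  -- read the period of `z` from `f^{-n₁} z`, where the shadowing of `p` begins
  set w := (f ^ (-(n₁ : ℤ))) z with hw_def
  have hwz : f^[n₁] w = z := by
    rw [hw_def, f.iterate_zpow_neg_apply le_rfl, Nat.sub_self]
    simp
  have hpw : (f ^ (-(n₁ : ℤ))) p = p := f.injective.iterate n₁ <| by
    rw [f.iterate_zpow_neg_apply le_rfl, (hp.trans_dvd hn₁).eq]
    simp
  have hw : IsPeriodicPt f k w := f.injective.iterate n₁ <| by
    rw [← iterate_add_apply, add_comm, iterate_add_apply, hwz, hz.eq]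
  have hSz : birkhoffSum f g k z = birkhoffSum f g k w := by
    rw [← hwz, hw.birkhoffSum_apply_iterate]
  rw [hSz, ← hp.birkhoffSum_eq_mul_birkhoffAverage hn₁, ← hq.birkhoffSum_eq_mul_birkhoffAverage hn₂,
    ← hpw]
  refine _root_.abs_birkhoffSum_sub_le_of_shadowing hg hk (fun j hj => ?_) (fun j hj => ?_)
  · rw [f.iterate_zpow_neg_apply hj.le, f.iterate_zpow_neg_apply hj.le]
    exact hback _ (Nat.sub_le _ _)
  · rw [add_comm n₁ N, iterate_add_apply, hwz, ← iterate_add_apply]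
    exact hfwd j hj.le

theorem barycenter_convex_combination_of_periodic_measures_general
    {M : Type*} [MetricSpace M] [CompactSpace M]
    (f : Equiv.Perm M)
    (Λ : Set M)
    (C : ℕ) (hbary : BarycenterProperty f Λ C)
    (p q : M) (hp : p ∈ Λ) (hq : q ∈ Λ)
    (kp kq : ℕ) (hkp : 0 < kp) (hkq : 0 < kq)
    (hpper : (⇑f)^[kp] p = p) (hqper : (⇑f)^[kq] q = q) :
    ∀ t : ℝ, t ∈ Set.Icc (0 : ℝ) 1 → ∀ ε : ℝ, 0 < ε →
      ∀ (ι : Type) [Fintype ι], ∀ ξ : ι → M → ℝ,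
        (∀ i, Continuous (ξ i)) → (∀ i, ∀ x, |ξ i x| ≤ 1) →
        ∃ z ∈ Λ, ∃ k : ℕ, 0 < k ∧ (⇑f)^[k] z = z ∧
          ∀ i : ι,
            |(k : ℝ)⁻¹ * ∑ j ∈ Finset.range k, ξ i ((⇑f)^[j] z)
              - (t * ((kp : ℝ)⁻¹ * ∑ j ∈ Finset.range kp, ξ i ((⇑f)^[j] p))
                 + (1 - t) * ((kq : ℝ)⁻¹ * ∑ j ∈ Finset.range kq, ξ i ((⇑f)^[j] q)))|
            < ε := by
  intro t ht ε hε ι _ ξ hξc hξb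
  obtain ⟨δ, hδ, hξδ⟩ := exists_pos_forall_abs_sub_lt_of_dist_lt hξc (half_pos hε)
  obtain ⟨N, hN, hbaryN⟩ := hbary p q hp hq ⟨kp, hkp, hpper⟩ ⟨kq, hkq, hqper⟩ δ hδ
  set K := kp * kq
  -- the final error is at most `ε/2 + (2K + 3(C + 1)N)/k`, and `m ≤ k`
  obtain ⟨m, hm⟩ := exists_nat_gt (2 * (2 * K + 3 * ((C + 1) * N)) / ε)
  obtain ⟨n₁, n₂, hKn₁, hKn₂, hmK, h₁, h₂⟩ := exists_convex_split ht m K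
  obtain ⟨z, hzΛ, k, hk₁, hk₂, hkz, hback, hfwd⟩ := hbaryN n₁ n₂
  have hkK : (m * K : ℝ) ≤ k ∧ (k : ℝ) ≤ m * K + (C + 1) * N := by
    constructor <;> norm_cast <;> nlinarith
  have hk : 0 < k := by omega
  refine ⟨z, hzΛ, k, hk, hkz, fun i => ?_⟩
  have hS := f.abs_birkhoffSum_sub_le_of_shadowing (hξb i) hkz hpper hqper
    ((dvd_mul_right kp kq).trans hKn₁) ((dvd_mul_left kq kp).trans hKn₂) hk₁
    (fun j hj => (hξδ i _ _ (hback j hj)).le) (fun j hj => (hξδ i _ _ (hfwd j hj)).le)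
  have hconv := abs_inv_mul_sub_convex_le (by positivity)
    (abs_birkhoffAverage_le (hξb i) kp p) (abs_birkhoffAverage_le (hξb i) kq q) hS
    (abs_sub_mul_le_of_abs_sub_mul_le ht h₁ hkK.1 hkK.2)
    (abs_sub_mul_le_of_abs_sub_mul_le ⟨by linarith [ht.2], by linarith [ht.1]⟩ h₂ hkK.1 hkK.2)
  refine hconv.trans_lt ?_
  have hK : (1 : ℝ) ≤ K := by exact_mod_cast Nat.mul_pos hkp hkq
  have hn : (n₁ + n₂ : ℝ) = m * K := by exact_mod_cast hmK
  have hmε : 2 * (2 * K + 3 * ((C + 1) * N)) < m * ε := (div_lt_iff₀ hε).mp hm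
  rw [div_lt_iff₀ (by positivity)]
  nlinarith

/-- under the barycenter property, time-averaged measures of periodic
orbits can be combined in any convex proportion `t : (1-t)`: for any finite family of
continuous test functions bounded by `1` and any `ε > 0` there is a periodic `z ∈ Λ`
whose orbit average is `ε`-close to `t ∫ξ dμ_p + (1-t) ∫ξ dμ_q` for each `ξ`. -/
theorem barycenter_convex_combination_of_periodic_measures
    {M : Type*} [MetricSpace M] [CompactSpace M]
    (f : Equiv.Perm M) (hf : Continuous ⇑f) (hf' : Continuous ⇑f.symm)
    (Λ : Set M) (hΛc : IsCompact Λ) (hΛinv : ⇑f '' Λ = Λ)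
    (C : ℕ) (hbary : BarycenterProperty f Λ C)
    (p q : M) (hp : p ∈ Λ) (hq : q ∈ Λ)
    (kp kq : ℕ) (hkp : 0 < kp) (hkq : 0 < kq)
    (hpper : (⇑f)^[kp] p = p) (hqper : (⇑f)^[kq] q = q) :
    ∀ t : ℝ, t ∈ Set.Icc (0 : ℝ) 1 → ∀ ε : ℝ, 0 < ε →
      ∀ (ι : Type) [Fintype ι], ∀ ξ : ι → M → ℝ,
        (∀ i, Continuous (ξ i)) → (∀ i, ∀ x, |ξ i x| ≤ 1) →
        ∃ z ∈ Λ, ∃ k : ℕ, 0 < k ∧ (⇑f)^[k] z = z ∧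
          ∀ i : ι,
            |(k : ℝ)⁻¹ * ∑ j ∈ Finset.range k, ξ i ((⇑f)^[j] z)
              - (t * ((kp : ℝ)⁻¹ * ∑ j ∈ Finset.range kp, ξ i ((⇑f)^[j] p))
                 + (1 - t) * ((kq : ℝ)⁻¹ * ∑ j ∈ Finset.range kq, ξ i ((⇑f)^[j] q)))|
            < ε :=
  barycenter_convex_combination_of_periodic_measures_general f Λ C hbary p q hp hq kp kq hkp hkq
    hpper hqper
end
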